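/- arXiv:2410.02453 — 2 statements merged into one kernel-verified Lean document; each statement's English description precedes it below -/
import Mathlib

section
/- If X is a Poisson random variable with parameter λ > 0, then E[1/X | X ≥ 1] ≤ 2/E[X | X ≥ 1]. -/
/-!
Write `p_k = e^{-λ} λ^k / k!`. The Poisson mean is `∑ k p_k = λ`, so the claim reads
`λ ∑_{k ≥ 1} p_k / k ≤ 2 (1 - e^{-λ})²`. From `1/k ≤ 2/(k+1)` for `k ≥ 1` we get
`λ ∑_{k ≥ 1} p_k / k ≤ 2 ∑_{k ≥ 2} p_k = 2 (1 - e^{-λ} - λ e^{-λ})`, and this is at most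
`2 (1 - e^{-λ})²` because `1 - λ ≤ e^{-λ}`.
-/

open Real Nat

lemma hasSum_pow_div_factorial (x : ℝ) : HasSum (fun k : ℕ => x ^ k / k !) (exp x) := by
  rw [exp_eq_exp_ℝ]
  exact NormedSpace.expSeries_div_hasSum_exp x

lemma hasSum_natCast_mul_pow_div_factorial (x : ℝ) :
    HasSum (fun k : ℕ => (k : ℝ) * (x ^ k / k !)) (x * exp x) := by
  rw [← hasSum_nat_add_iff' 1]
  simp only [Finset.range_one, Finset.sum_singleton, CharP.cast_eq_zero, zero_mul, sub_zero]
  refine ((hasSum_pow_div_factorial x).mul_left x).congr_fun fun n => ?_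
  rw [factorial_succ]
  push_cast
  field_simp
  ring

lemma hasSum_pow_add_two_div_factorial (x : ℝ) :
    HasSum (fun n : ℕ => x ^ (n + 2) / (n + 2)!) (exp x - 1 - x) := by
  have h := (hasSum_nat_add_iff' 2).mpr (hasSum_pow_div_factorial x)
  simpa [Finset.sum_range_succ, sub_sub] using h

lemma mul_inv_mul_pow_div_factorial_le {x : ℝ} (hx : 0 ≤ x) (n : ℕ) :
    x * (1 / ((n + 1 : ℕ) : ℝ) * (x ^ (n + 1) / (n + 1)!)) ≤ 2 * (x ^ (n + 2) / (n + 2)!) := by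
  have hfact : ((n + 2)! : ℝ) = (n + 2) * (n + 1)! := by
    push_cast [factorial_succ (n + 1)]
    ring
  have hcoeff : 1 / ((n + 1 : ℕ) : ℝ) / (n + 1)! ≤ 2 / (n + 2)! := by
    rw [hfact, div_div, div_le_div_iff₀ (by positivity) (by positivity)]
    push_cast
    have hf : (0 : ℝ) < (n + 1)! := by positivity
    nlinarith [n.cast_nonneg (α := ℝ)]
  calc x * (1 / ((n + 1 : ℕ) : ℝ) * (x ^ (n + 1) / (n + 1)!))
      = x ^ (n + 2) * (1 / ((n + 1 : ℕ) : ℝ) / (n + 1)!) := by ring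
    _ ≤ x ^ (n + 2) * (2 / (n + 2)!) := mul_le_mul_of_nonneg_left hcoeff (pow_nonneg hx _)
    _ = 2 * (x ^ (n + 2) / (n + 2)!) := by ring

lemma mul_tsum_inv_mul_pow_div_factorial_le {x : ℝ} (hx : 0 ≤ x) :
    x * ∑' k : ℕ, 1 / (k : ℝ) * (x ^ k / k !) ≤ 2 * (exp x - 1 - x) := by
  set f : ℕ → ℝ := fun k => 1 / (k : ℝ) * (x ^ k / k !)
  have hf : Summable f := by
    refine (Real.summable_pow_div_factorial x).of_nonneg_of_le (fun k => by positivity) fun k => ?_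
    have hk : 1 / (k : ℝ) ≤ 1 := by
      rcases k.eq_zero_or_pos with rfl | hk
      · simp
      · exact div_le_one_of_le₀ (by exact_mod_cast hk) k.cast_nonneg
    exact mul_le_of_le_one_left (by positivity) hk
  have hshift : HasSum (fun n => x * f (n + 1)) (x * ∑' k, f k) := by
    have h := ((hasSum_nat_add_iff' 1).mpr hf.hasSum).mul_left x
    simpa [f] using h
  exact hasSum_le (mul_inv_mul_pow_div_factorial_le hx) hshift
    ((hasSum_pow_add_two_div_factorial x).mul_left 2)

lemma tsum_mul_exp_neg_mul_pow_div_factorial (c : ℕ → ℝ) (x : ℝ) :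
    ∑' k : ℕ, c k * (exp (-x) * x ^ k / k !) = exp (-x) * ∑' k : ℕ, c k * (x ^ k / k !) := by
  simp_rw [mul_div_assoc, mul_left_comm (c _)]
  exact tsum_mul_left

/-- Expectations conditioned on `X ≥ 1` are expressed via the Poisson pmf
`P(X = k) = exp(-λ) λ^k / k!` divided by `P(X ≥ 1) = 1 - exp(-λ)`.
(The `k = 0` terms vanish: `1/0 = 0` in `ℝ` and `0 * _ = 0`.) -/
theorem poisson_inv_cond_exp_le (l : ℝ) (hl : 0 < l) :
    (∑' k : ℕ, (1 / (k : ℝ)) * (Real.exp (-l) * l ^ k / (Nat.factorial k))) /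
        (1 - Real.exp (-l)) ≤
      2 / ((∑' k : ℕ, (k : ℝ) * (Real.exp (-l) * l ^ k / (Nat.factorial k))) /
        (1 - Real.exp (-l))) := by
  have hexp : exp (-l) * exp l = 1 := by rw [← exp_add, neg_add_cancel, exp_zero]
  have hq : 0 < 1 - exp (-l) := sub_pos.mpr (exp_lt_one_iff.mpr (neg_lt_zero.mpr hl))
  have htangent : 1 - l ≤ exp (-l) := by linarith [add_one_le_exp (-l)]
  have hmean : exp (-l) * (l * exp l) = l := by rw [mul_left_comm, hexp, mul_one]
  rw [tsum_mul_exp_neg_mul_pow_div_factorial, tsum_mul_exp_neg_mul_pow_div_factorial,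
    (hasSum_natCast_mul_pow_div_factorial l).tsum_eq, hmean, div_div_eq_mul_div,
    div_le_div_iff₀ hq hl]
  set A := ∑' k : ℕ, 1 / (k : ℝ) * (l ^ k / k !)
  calc exp (-l) * A * l = exp (-l) * (l * A) := by ring
    _ ≤ exp (-l) * (2 * (exp l - 1 - l)) :=
        mul_le_mul_of_nonneg_left (mul_tsum_inv_mul_pow_div_factorial_le hl.le) (exp_pos _).le
    _ = 2 * (1 - exp (-l) - l * exp (-l)) := by linear_combination 2 * hexp
    _ ≤ 2 * (1 - exp (-l)) * (1 - exp (-l)) := by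
        linarith [mul_le_mul_of_nonneg_left htangent (exp_pos (-l)).le]
end

section
/- Let X₁,...,X_m be independent Bernoulli random variables with parameters p₁,...,p_m and let S = Σ X_i. Then the total variation distance between the law of S and the Poisson distribution with parameter λ = Σ p_i is at most Σ p_i² (Le Cam's inequality). -/
/-! The distance `sup_A |μ A - ν A|` is subadditive under convolution: since
`(μ ∗ ν) A = ∫ ν (A - x) dμ(x)`, replacing one factor of a convolution of probability measures
moves the mass of every set by at most the distance between the two versions of that factor.
The law of `S` is the convolution of the Bernoulli laws of the `X i`, `Po(λ)` is the
convolution of the `Po(p i)`, and a Bernoulli law `B(p)` is within `p (1 - e^{-p}) ≤ p²` of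
`Po(p)`, since `B(p)` exceeds `Po(p)` only at `1`. The errors add up to `Σ (p i)²`. -/

open MeasureTheory ProbabilityTheory
open scoped Classical NNReal

namespace MeasureTheory

section Convolution

variable {M : Type*} [MeasurableSpace M]

lemma measureReal_conv_apply [AddMonoid M] [MeasurableAdd₂ M] (μ ν : Measure M)
    [IsFiniteMeasure μ] [IsFiniteMeasure ν] {A : Set M} (hA : MeasurableSet A) :
    (μ ∗ ν).real A = ∫ x, ν.real ((x + ·) ⁻¹' A) ∂μ := by
  have hA' : MeasurableSet ((fun z : M × M ↦ z.1 + z.2) ⁻¹' A) := measurable_add hA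
  rw [measureReal_def, Measure.conv, Measure.map_apply measurable_add hA,
    Measure.prod_apply hA']
  simp only [measureReal_def]
  rw [integral_toReal]
  · rfl
  · exact (measurable_measure_prodMk_left hA').aemeasurable
  · exact Filter.Eventually.of_forall fun _ ↦ measure_lt_top _ _

lemma abs_measureReal_conv_sub_conv_le [AddMonoid M] [MeasurableAdd₂ M] (μ ν₁ ν₂ : Measure M)
    [IsProbabilityMeasure μ] [IsFiniteMeasure ν₁] [IsFiniteMeasure ν₂] {δ : ℝ}
    (hν : ∀ A, MeasurableSet A → |ν₁.real A - ν₂.real A| ≤ δ) {A : Set M}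
    (hA : MeasurableSet A) :
    |(μ ∗ ν₁).real A - (μ ∗ ν₂).real A| ≤ δ := by
  have hint (ν : Measure M) [IsFiniteMeasure ν] :
      Integrable (fun x ↦ ν.real ((x + ·) ⁻¹' A)) μ := by
    have hmeas := (measurable_measure_prodMk_left (ν := ν) (measurable_add hA)).ennreal_toReal
    refine .of_bound hmeas.aestronglyMeasurable (ν.real Set.univ)
      (Filter.Eventually.of_forall fun x ↦ ?_)
    rw [Real.norm_of_nonneg measureReal_nonneg]
    exact measureReal_mono (Set.subset_univ _)
  rw [measureReal_conv_apply μ ν₁ hA, measureReal_conv_apply μ ν₂ hA,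
    ← integral_sub (hint ν₁) (hint ν₂)]
  have := norm_integral_le_of_norm_le_const (μ := μ)
    (f := fun x ↦ ν₁.real ((x + ·) ⁻¹' A) - ν₂.real ((x + ·) ⁻¹' A))
    (Filter.Eventually.of_forall fun x ↦ hν _ (measurable_const_add x hA))
  simpa using this

lemma abs_measureReal_conv_sub_conv_le_add [AddCommMonoid M] [MeasurableAdd₂ M]
    {μ₁ μ₂ ν₁ ν₂ : Measure M} [IsProbabilityMeasure μ₁] [IsProbabilityMeasure μ₂]
    [IsProbabilityMeasure ν₁] [IsProbabilityMeasure ν₂] {ε δ : ℝ}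
    (hμ : ∀ A, MeasurableSet A → |μ₁.real A - μ₂.real A| ≤ ε)
    (hν : ∀ A, MeasurableSet A → |ν₁.real A - ν₂.real A| ≤ δ) {A : Set M}
    (hA : MeasurableSet A) :
    |(μ₁ ∗ ν₁).real A - (μ₂ ∗ ν₂).real A| ≤ ε + δ := by
  have h₁ := abs_measureReal_conv_sub_conv_le ν₁ μ₁ μ₂ hμ hA
  have h₂ := abs_measureReal_conv_sub_conv_le μ₂ ν₁ ν₂ hν hA
  rw [Measure.conv_comm ν₁, Measure.conv_comm ν₁] at h₁
  calc |(μ₁ ∗ ν₁).real A - (μ₂ ∗ ν₂).real A|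
      ≤ |(μ₁ ∗ ν₁).real A - (μ₂ ∗ ν₁).real A| + |(μ₂ ∗ ν₁).real A - (μ₂ ∗ ν₂).real A| :=
        abs_sub_le _ _ _
    _ ≤ ε + δ := add_le_add h₁ h₂

end Convolution

lemma measureReal_inter_pair {α : Type*} [MeasurableSpace α] [MeasurableSingletonClass α]
    (μ : Measure α) [IsFiniteMeasure μ] {a b : α} (hab : a ≠ b) (A : Set α) :
    μ.real (A ∩ {a, b}) =
      (if a ∈ A then μ.real {a} else 0) + (if b ∈ A then μ.real {b} else 0) := by
  have : A ∩ {a, b} = ↑(({a, b} : Finset α).filter (· ∈ A)) := by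
    ext k
    simp only [Set.mem_inter_iff, Set.mem_insert_iff, Set.mem_singleton_iff,
      Finset.coe_filter, Finset.mem_insert, Finset.mem_singleton, Set.mem_ofPred_eq]
    tauto
  rw [this, ← sum_measureReal_singleton, Finset.sum_filter, Finset.sum_pair hab]

end MeasureTheory

namespace ProbabilityTheory

lemma poissonMeasure_real_eq_tsum (r : ℝ≥0) (A : Set ℕ) :
    (poissonMeasure r).real A =
      ∑' k, if k ∈ A then Real.exp (-r) * r ^ k / k.factorial else 0 := by
  rw [← integral_indicator_one .of_discrete, integral_poissonMeasure]
  congr with k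
  by_cases hk : k ∈ A <;> simp [hk]

lemma poissonMeasure_zero : poissonMeasure 0 = Measure.dirac 0 := by
  refine Measure.ext_iff_singleton.mpr fun n ↦ ?_
  rcases n with _ | n <;> simp [poissonMeasure_singleton]

section Bernoulli

variable {ν : Measure ℕ} [IsProbabilityMeasure ν] {p : ℝ≥0}

lemma measureReal_sub_poissonMeasure_real_le (hν : ν {0, 1}ᶜ = 0) (h₁ : ν.real {1} = p)
    (A : Set ℕ) :
    ν.real A - (poissonMeasure p).real A ≤ p * (1 - Real.exp (-p)) := by
  have hsupp (B : Set ℕ) : ν.real B = ν.real (B ∩ {0, 1}) := by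
    rw [measureReal_def, measureReal_def, measure_inter_conull hν]
  have h₀ : ν.real {0} = 1 - p := by
    have := hsupp Set.univ
    rw [probReal_univ, measureReal_inter_pair ν zero_ne_one, h₁] at this
    simp only [Set.mem_univ, if_true] at this
    linarith
  have hle : (poissonMeasure p).real (A ∩ {0, 1}) ≤ (poissonMeasure p).real A :=
    measureReal_mono Set.inter_subset_left
  have hπ₀ : (poissonMeasure p).real {0} = Real.exp (-p) := by
    simp [poissonMeasure_real_singleton]
  have hπ₁ : (poissonMeasure p).real {1} = p * Real.exp (-p) := by
    simp [poissonMeasure_real_singleton, mul_comm]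
  have hexp := Real.add_one_le_exp (-p)
  have hexp_le : Real.exp (-p) ≤ 1 := Real.exp_le_one_iff.mpr (by simp)
  rw [hsupp]
  refine le_trans (sub_le_sub_left hle _) ?_
  rw [measureReal_inter_pair _ zero_ne_one, measureReal_inter_pair _ zero_ne_one, h₀, h₁,
    hπ₀, hπ₁]
  split_ifs <;> nlinarith [p.2]

lemma abs_measureReal_sub_poissonMeasure_real_le_sq (hν : ν {0, 1}ᶜ = 0)
    (h₁ : ν.real {1} = p) (A : Set ℕ) :
    |ν.real A - (poissonMeasure p).real A| ≤ p ^ 2 := by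
  have hp : p * (1 - Real.exp (-p)) ≤ p ^ 2 := by nlinarith [Real.add_one_le_exp (-p), p.2]
  rw [abs_sub_le_iff]
  constructor
  · exact (measureReal_sub_poissonMeasure_real_le hν h₁ A).trans hp
  · have := measureReal_sub_poissonMeasure_real_le hν h₁ Aᶜ
    rw [probReal_compl_eq_one_sub .of_discrete, probReal_compl_eq_one_sub .of_discrete] at this
    linarith

end Bernoulli

lemma abs_measureReal_map_sum_sub_poissonMeasure_le {Ω ι : Type*} [MeasurableSpace Ω]
    {μ : Measure Ω} [IsProbabilityMeasure μ] {X : ι → Ω → ℕ} (hX : ∀ i, Measurable (X i))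
    (hindep : iIndepFun X μ) {r : ι → ℝ≥0} {ε : ι → ℝ}
    (hε : ∀ i A, |(μ.map (X i)).real A - (poissonMeasure (r i)).real A| ≤ ε i)
    (s : Finset ι) (A : Set ℕ) :
    |(μ.map (∑ i ∈ s, X i)).real A - (poissonMeasure (∑ i ∈ s, r i)).real A| ≤
      ∑ i ∈ s, ε i := by
  induction s using Finset.induction_on generalizing A with
  | empty => simp [poissonMeasure_zero, Pi.zero_def, Measure.map_const]
  | @insert a s ha ih =>
    have hS : Measurable (∑ i ∈ s, X i) := by
      simpa only [← Finset.sum_apply] using Finset.measurable_sum s fun i _ ↦ hX i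
    have := Measure.isProbabilityMeasure_map (μ := μ) hS.aemeasurable
    have := Measure.isProbabilityMeasure_map (μ := μ) (hX a).aemeasurable
    rw [Finset.sum_insert ha, Finset.sum_insert ha, Finset.sum_insert ha, add_comm (X a),
      add_comm (r a), add_comm (ε a), ← poissonMeasure_conv_poissonMeasure,
      (hindep.indepFun_finsetSum_of_notMem hX ha).map_add_eq_map_conv_map hS (hX a)]
    exact abs_measureReal_conv_sub_conv_le_add (fun B _ ↦ ih B) (fun B _ ↦ hε a B) .of_discrete

end ProbabilityTheory

/-- **Le Cam's inequality.** Let `X 1, …, X m` be independent Bernoulli random variables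
with parameters `p 1, …, p m` and `S = Σ X i`. Then the total variation distance between
the law of `S` and the Poisson distribution with parameter `λ = Σ p i` is at most
`Σ (p i)²`: for every set `A ⊆ ℕ`,
`|P(S ∈ A) - Σ_{k ∈ A} e^{-λ} λ^k / k!| ≤ Σ (p i)²`. -/
theorem le_cam_inequality {Ω : Type*} [MeasureSpace Ω]
    [IsProbabilityMeasure (volume : Measure Ω)]
    (m : ℕ) (X : Fin m → Ω → ℕ) (hmeas : ∀ i, Measurable (X i))
    (hval : ∀ i ω, X i ω = 0 ∨ X i ω = 1)
    (p : Fin m → ℝ) (hp : ∀ i, 0 ≤ p i ∧ p i ≤ 1)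
    (hbern : ∀ i, (volume {ω | X i ω = 1}).toReal = p i)
    (hindep : iIndepFun X volume) :
    ∀ A : Set ℕ,
      |(volume {ω | (∑ i, X i ω) ∈ A}).toReal -
          ∑' k : ℕ, (if h : k ∈ A then
            Real.exp (-(∑ i, p i)) * (∑ i, p i) ^ k / (Nat.factorial k) else 0)| ≤
        ∑ i, (p i) ^ 2 := by
  intro A
  let r i : ℝ≥0 := ⟨p i, (hp i).1⟩
  have hlaw i B : |(volume.map (X i)).real B - (poissonMeasure (r i)).real B| ≤ p i ^ 2 := by
    have := Measure.isProbabilityMeasure_map (μ := volume) (hmeas i).aemeasurable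
    refine abs_measureReal_sub_poissonMeasure_real_le_sq ?_ ?_ B
    · rw [Measure.map_apply (hmeas i) .of_discrete]
      convert measure_empty (μ := volume)
      ext ω
      rcases hval i ω with h | h <;> simp [h]
    · rw [map_measureReal_apply (hmeas i) .of_discrete]
      exact hbern i
  have hsum : Measurable (∑ i, X i) := by
    simpa only [← Finset.sum_apply] using Finset.measurable_sum _ fun i _ ↦ hmeas i
  have hle := abs_measureReal_map_sum_sub_poissonMeasure_le hmeas hindep hlaw Finset.univ A
  rw [map_measureReal_apply hsum .of_discrete, poissonMeasure_real_eq_tsum, NNReal.coe_sum] at hle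
  convert hle using 3
  · simp [measureReal_def, Set.preimage, Finset.sum_apply]
  · rfl
end
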